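/- Let G : ℝ → (0,∞) be a nonconstant continuous periodic function with period T > 0, and let A be a bounded subset of ℝ^N such that |A_t| = t^{N-D}(G(log(1/t)) + O(t^α)) as t → 0⁺ for some D ≥ 0 and α > 0. Then dim_B(A) exists and equals D, and the lower and upper Minkowski contents are M_*^D(A) = min G and M^{*D}(A) = max G. In particular, A is Minkowski nondegenerate, and if G is nonconstant, A is not Minkowski measurable. -/

import Mathlib

open MeasureTheory Metric Filter Set Topology

/-- Upper Minkowski content of a bounded set `A ⊆ ℝ^N`. -/
noncomputable def upperMinkowskiContent (N : ℕ) (A : Set (EuclideanSpace ℝ (Fin N)))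
    (r : ℝ) : ENNReal :=
  Filter.limsup
    (fun t : ℝ => volume (Metric.thickening t A) / ENNReal.ofReal (t ^ ((N : ℝ) - r)))
    (nhdsWithin 0 (Set.Ioi 0))

/-- Lower Minkowski content of a bounded set `A ⊆ ℝ^N`. -/
noncomputable def lowerMinkowskiContent (N : ℕ) (A : Set (EuclideanSpace ℝ (Fin N)))
    (r : ℝ) : ENNReal :=
  Filter.liminf
    (fun t : ℝ => volume (Metric.thickening t A) / ENNReal.ofReal (t ^ ((N : ℝ) - r)))
    (nhdsWithin 0 (Set.Ioi 0))

noncomputable def upperBoxDim (N : ℕ) (A : Set (EuclideanSpace ℝ (Fin N))) : ℝ :=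
  sInf {r : ℝ | upperMinkowskiContent N A r = 0}

noncomputable def lowerBoxDim (N : ℕ) (A : Set (EuclideanSpace ℝ (Fin N))) : ℝ :=
  sInf {r : ℝ | lowerMinkowskiContent N A r = 0}

/-!
Writing `t = e^{-s}`, the normalized volume `|A_t| / t^{N-D}` differs from `G(s)` by
`O(e^{-αs})`, so its upper and lower limits as `t → 0⁺` are those of `G(s)` as `s → ∞`; since
`G` takes each of its values along `s = x + nT`, these are `max G` and `min G`. As
`0 < min G ≤ max G < ∞`, the factor `t^{r-D}` sends the contents at `r > D` to `0` and keeps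
those at `r < D` positive, whence `dim_B A = D`.
-/

theorem limsup_comp_eq_iSup_of_frequently {α β γ : Type*} [CompleteLattice γ] {l : Filter α}
    {φ : α → β} {h : β → γ} (hφ : ∀ x, ∃ᶠ a in l, h (φ a) = h x) :
    limsup (fun a => h (φ a)) l = ⨆ x, h x :=
  le_antisymm (limsup_le_iSup.trans (iSup_le fun a => le_iSup h (φ a)))
    (iSup_le fun x => le_limsup_of_frequently_le' ((hφ x).mono fun _ ha => ha.ge))

theorem liminf_comp_eq_iInf_of_frequently {α β γ : Type*} [CompleteLattice γ] {l : Filter α}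
    {φ : α → β} {h : β → γ} (hφ : ∀ x, ∃ᶠ a in l, h (φ a) = h x) :
    liminf (fun a => h (φ a)) l = ⨅ x, h x :=
  le_antisymm (le_iInf fun x => liminf_le_of_frequently_le' ((hφ x).mono fun _ ha => ha.le))
    ((le_iInf fun a => iInf_le h (φ a)).trans iInf_le_liminf)

theorem Function.Periodic.frequently_log_one_div_eq {β : Type*} {G : ℝ → β} {T : ℝ}
    (hG : Function.Periodic G T) (hT : 0 < T) (x : ℝ) :
    ∃ᶠ t in 𝓝[>] (0 : ℝ), G (Real.log (1 / t)) = G x := by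
  rw [← Real.map_exp_atBot, frequently_map, frequently_atBot]
  intro a
  obtain ⟨n, hn⟩ := exists_nat_ge ((-a - x) / T)
  refine ⟨-(x + n * T), ?_, ?_⟩
  · have := (div_le_iff₀ hT).1 hn
    linarith
  · rw [one_div, ← Real.exp_neg, neg_neg, Real.log_exp]
    exact hG.nat_mul n x

namespace ENNReal

theorem limsup_ofReal_le_of_tendsto_sub {α : Type*} {l : Filter α} {u v : α → ℝ}
    (h : Tendsto (fun a => u a - v a) l (𝓝 0)) :
    limsup (fun a => ENNReal.ofReal (u a)) l ≤ limsup (fun a => ENNReal.ofReal (v a)) l := by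
  have hofReal : Tendsto (fun a => ENNReal.ofReal (u a - v a)) l (𝓝 0) := by
    simpa using ENNReal.tendsto_ofReal h
  calc limsup (fun a => ENNReal.ofReal (u a)) l
      ≤ limsup ((fun a => ENNReal.ofReal (v a)) + fun a => ENNReal.ofReal (u a - v a)) l :=
        limsup_le_limsup (.of_forall fun a => by
          simpa using ENNReal.ofReal_add_le (p := v a) (q := u a - v a))
    _ = limsup (fun a => ENNReal.ofReal (v a)) l := limsup_add_of_right_tendsto_zero hofReal _

theorem limsup_ofReal_eq_of_tendsto_sub {α : Type*} {l : Filter α} {u v : α → ℝ}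
    (h : Tendsto (fun a => u a - v a) l (𝓝 0)) :
    limsup (fun a => ENNReal.ofReal (u a)) l = limsup (fun a => ENNReal.ofReal (v a)) l :=
  le_antisymm (limsup_ofReal_le_of_tendsto_sub h)
    (limsup_ofReal_le_of_tendsto_sub (by simpa using h.neg))

theorem liminf_ofReal_le_of_tendsto_sub {α : Type*} {l : Filter α} {u v : α → ℝ}
    (h : Tendsto (fun a => u a - v a) l (𝓝 0)) :
    liminf (fun a => ENNReal.ofReal (u a)) l ≤ liminf (fun a => ENNReal.ofReal (v a)) l := by
  have hofReal : Tendsto (fun a => ENNReal.ofReal (u a - v a)) l (𝓝 0) := by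
    simpa using ENNReal.tendsto_ofReal h
  calc liminf (fun a => ENNReal.ofReal (u a)) l
      ≤ liminf ((fun a => ENNReal.ofReal (v a)) + fun a => ENNReal.ofReal (u a - v a)) l :=
        liminf_le_liminf (.of_forall fun a => by
          simpa using ENNReal.ofReal_add_le (p := v a) (q := u a - v a))
    _ = liminf (fun a => ENNReal.ofReal (v a)) l := liminf_add_of_right_tendsto_zero hofReal _

theorem liminf_ofReal_eq_of_tendsto_sub {α : Type*} {l : Filter α} {u v : α → ℝ}
    (h : Tendsto (fun a => u a - v a) l (𝓝 0)) :
    liminf (fun a => ENNReal.ofReal (u a)) l = liminf (fun a => ENNReal.ofReal (v a)) l :=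
  le_antisymm (liminf_ofReal_le_of_tendsto_sub h)
    (liminf_ofReal_le_of_tendsto_sub (by simpa using h.neg))

end ENNReal

theorem ciInf_lt_ciSup_of_ne {ι α : Type*} [ConditionallyCompleteLinearOrder α] {f : ι → α}
    (hb : BddBelow (range f)) (ha : BddAbove (range f)) {x y : ι} (hxy : f x ≠ f y) :
    ⨅ i, f i < ⨆ i, f i := by
  rcases hxy.lt_or_gt with h | h
  · exact (ciInf_le hb x).trans_lt (h.trans_le (le_ciSup ha y))
  · exact (ciInf_le hb y).trans_lt (h.trans_le (le_ciSup ha x))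

theorem tendsto_rpow_nhdsGT_zero {α : ℝ} (hα : 0 < α) :
    Tendsto (fun t : ℝ => t ^ α) (𝓝[>] 0) (𝓝 0) :=
  ((Real.continuous_rpow_const hα.le).tendsto' 0 0 (Real.zero_rpow hα.ne')).mono_left
    nhdsWithin_le_nhds

noncomputable def minkowskiRatio (N : ℕ) (A : Set (EuclideanSpace ℝ (Fin N))) (r t : ℝ) :
    ENNReal :=
  volume (thickening t A) / ENNReal.ofReal (t ^ ((N : ℝ) - r))

section MinkowskiContent

variable {N : ℕ} {A : Set (EuclideanSpace ℝ (Fin N))}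

theorem upperMinkowskiContent_eq_limsup (r : ℝ) :
    upperMinkowskiContent N A r = limsup (minkowskiRatio N A r) (𝓝[>] 0) := rfl

theorem lowerMinkowskiContent_eq_liminf (r : ℝ) :
    lowerMinkowskiContent N A r = liminf (minkowskiRatio N A r) (𝓝[>] 0) := rfl

theorem lowerMinkowskiContent_le_upperMinkowskiContent (r : ℝ) :
    lowerMinkowskiContent N A r ≤ upperMinkowskiContent N A r :=
  liminf_le_limsup

theorem minkowskiRatio_eq_mul_rpow {t : ℝ} (ht : 0 < t) (r s : ℝ) :
    minkowskiRatio N A s t = minkowskiRatio N A r t * ENNReal.ofReal (t ^ (s - r)) := by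
  have hsplit : ENNReal.ofReal (t ^ ((N : ℝ) - r))
      = ENNReal.ofReal (t ^ ((N : ℝ) - s)) * ENNReal.ofReal (t ^ (s - r)) := by
    rw [← ENNReal.ofReal_mul (Real.rpow_nonneg ht.le _), ← Real.rpow_add ht]
    ring_nf
  have hpos : ENNReal.ofReal (t ^ (s - r)) ≠ 0 := by
    simpa using Real.rpow_pos_of_pos ht (s - r)
  rw [minkowskiRatio, minkowskiRatio, hsplit, ← ENNReal.mul_div_mul_right _ _ hpos
    ENNReal.ofReal_ne_top, ENNReal.mul_div_right_comm]

theorem eventually_minkowskiRatio_le {r s : ℝ} (hrs : r ≤ s) :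
    ∀ᶠ t in 𝓝[>] 0, minkowskiRatio N A s t ≤ minkowskiRatio N A r t := by
  filter_upwards [Ioo_mem_nhdsGT one_pos] with t ht
  exact ENNReal.div_le_div_left (ENNReal.ofReal_le_ofReal
    (Real.rpow_le_rpow_of_exponent_ge ht.1 ht.2.le (by linarith))) _

theorem upperMinkowskiContent_antitone : Antitone (upperMinkowskiContent N A) :=
  fun _ _ hrs => limsup_le_limsup (eventually_minkowskiRatio_le hrs)

theorem lowerMinkowskiContent_antitone : Antitone (lowerMinkowskiContent N A) :=
  fun _ _ hrs => liminf_le_liminf (eventually_minkowskiRatio_le hrs)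

theorem upperMinkowskiContent_eq_zero_of_lt {r s : ℝ} (hr : upperMinkowskiContent N A r ≠ ⊤)
    (hrs : r < s) : upperMinkowskiContent N A s = 0 := by
  have htend : Tendsto (fun t : ℝ => ENNReal.ofReal (t ^ (s - r))) (𝓝[>] 0) (𝓝 0) := by
    simpa using ENNReal.tendsto_ofReal (tendsto_rpow_nhdsGT_zero (sub_pos.2 hrs))
  refine nonpos_iff_eq_zero.1 ?_
  calc upperMinkowskiContent N A s
      = limsup (minkowskiRatio N A r * fun t => ENNReal.ofReal (t ^ (s - r))) (𝓝[>] 0) :=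
        limsup_congr (eventually_mem_nhdsWithin.mono fun t ht => minkowskiRatio_eq_mul_rpow ht r s)
    _ ≤ upperMinkowskiContent N A r * limsup (fun t => ENNReal.ofReal (t ^ (s - r))) (𝓝[>] 0) :=
        ENNReal.limsup_mul_le' (.inr (htend.limsup_eq ▸ ENNReal.zero_ne_top)) (.inl hr)
    _ = 0 := by rw [htend.limsup_eq, mul_zero]

theorem upperBoxDim_eq_of_pos_of_ne_top {D : ℝ} (hpos : 0 < upperMinkowskiContent N A D)
    (hfin : upperMinkowskiContent N A D ≠ ⊤) : upperBoxDim N A = D := by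
  suffices {r | upperMinkowskiContent N A r = 0} = Ioi D by rw [upperBoxDim, this, csInf_Ioi]
  ext r
  refine ⟨fun hr => mem_Ioi.2 <| lt_of_not_ge fun hrD => ?_,
    upperMinkowskiContent_eq_zero_of_lt hfin⟩
  exact hpos.ne' (nonpos_iff_eq_zero.1 ((upperMinkowskiContent_antitone hrD).trans hr.le))

theorem lowerBoxDim_eq_of_pos_of_ne_top {D : ℝ} (hpos : 0 < lowerMinkowskiContent N A D)
    (hfin : upperMinkowskiContent N A D ≠ ⊤) : lowerBoxDim N A = D := by
  suffices {r | lowerMinkowskiContent N A r = 0} = Ioi D by rw [lowerBoxDim, this, csInf_Ioi]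
  ext r
  refine ⟨fun hr => mem_Ioi.2 <| lt_of_not_ge fun hrD => ?_, fun hrD => ?_⟩
  · exact hpos.ne' (nonpos_iff_eq_zero.1 ((lowerMinkowskiContent_antitone hrD).trans hr.le))
  · exact nonpos_iff_eq_zero.1 ((lowerMinkowskiContent_le_upperMinkowskiContent r).trans
      (upperMinkowskiContent_eq_zero_of_lt hfin hrD).le)

end MinkowskiContent

theorem tendsto_div_rpow_sub_of_abs_sub_le {f g : ℝ → ℝ} {β α C ε : ℝ} (hα : 0 < α)
    (hε : 0 < ε) (h : ∀ t, 0 < t → t < ε → |f t - g t * t ^ β| ≤ C * t ^ (β + α)) :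
    Tendsto (fun t => f t / t ^ β - g t) (𝓝[>] 0) (𝓝 0) := by
  have hC : Tendsto (fun t : ℝ => C * t ^ α) (𝓝[>] 0) (𝓝 0) := by
    simpa using (tendsto_rpow_nhdsGT_zero hα).const_mul C
  refine squeeze_zero_norm' ?_ hC
  filter_upwards [Ioo_mem_nhdsGT hε] with t ht
  have hpos : 0 < t ^ β := Real.rpow_pos_of_pos ht.1 β
  calc ‖f t / t ^ β - g t‖ = |f t - g t * t ^ β| / t ^ β := by
        rw [Real.norm_eq_abs, ← abs_of_pos hpos, ← abs_div, abs_of_pos hpos]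
        congr 1
        field_simp
    _ ≤ C * t ^ (β + α) / t ^ β := by gcongr; exact h t ht.1 ht.2
    _ = C * t ^ α := by rw [Real.rpow_add ht.1]; field_simp

section PeriodicAsymptotics

variable {N : ℕ} {A : Set (EuclideanSpace ℝ (Fin N))} {G : ℝ → ℝ} {T D : ℝ}

theorem minkowskiRatio_eventuallyEq_ofReal (hA : Bornology.IsBounded A) (r : ℝ) :
    minkowskiRatio N A r =ᶠ[𝓝[>] 0]
      fun t => ENNReal.ofReal ((volume (thickening t A)).toReal / t ^ ((N : ℝ) - r)) := by
  filter_upwards [self_mem_nhdsWithin] with t ht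
  rw [minkowskiRatio, ENNReal.ofReal_div_of_pos (Real.rpow_pos_of_pos ht _),
    ENNReal.ofReal_toReal hA.thickening.measure_lt_top.ne]

theorem upperMinkowskiContent_eq_iSup_of_tendsto (hA : Bornology.IsBounded A)
    (hG : Function.Periodic G T) (hT : 0 < T)
    (h : Tendsto (fun t => (volume (thickening t A)).toReal / t ^ ((N : ℝ) - D)
      - G (Real.log (1 / t))) (𝓝[>] 0) (𝓝 0)) :
    upperMinkowskiContent N A D = ⨆ x, ENNReal.ofReal (G x) := by
  rw [upperMinkowskiContent_eq_limsup, limsup_congr (minkowskiRatio_eventuallyEq_ofReal hA D),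
    ENNReal.limsup_ofReal_eq_of_tendsto_sub h]
  exact limsup_comp_eq_iSup_of_frequently (h := fun x => ENNReal.ofReal (G x))
    fun x => (hG.frequently_log_one_div_eq hT x).mono fun t ht => by rw [ht]

theorem lowerMinkowskiContent_eq_iInf_of_tendsto (hA : Bornology.IsBounded A)
    (hG : Function.Periodic G T) (hT : 0 < T)
    (h : Tendsto (fun t => (volume (thickening t A)).toReal / t ^ ((N : ℝ) - D)
      - G (Real.log (1 / t))) (𝓝[>] 0) (𝓝 0)) :
    lowerMinkowskiContent N A D = ⨅ x, ENNReal.ofReal (G x) := by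
  rw [lowerMinkowskiContent_eq_liminf, liminf_congr (minkowskiRatio_eventuallyEq_ofReal hA D),
    ENNReal.liminf_ofReal_eq_of_tendsto_sub h]
  exact liminf_comp_eq_iInf_of_frequently (h := fun x => ENNReal.ofReal (G x))
    fun x => (hG.frequently_log_one_div_eq hT x).mono fun t ht => by rw [ht]

end PeriodicAsymptotics

theorem stmt_8_general (N : ℕ) (A : Set (EuclideanSpace ℝ (Fin N)))
    (hAb : Bornology.IsBounded A) (G : ℝ → ℝ) (T : ℝ) (hT : 0 < T)
    (hGcont : Continuous G) (hGper : Function.Periodic G T)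
    (hGpos : ∀ x, 0 < G x) (hGnonconst : ∃ x y, G x ≠ G y)
    (D α : ℝ) (hα : 0 < α)
    (hO : ∃ C ε : ℝ, 0 < C ∧ 0 < ε ∧ ∀ t : ℝ, 0 < t → t < ε →
      |(volume (Metric.thickening t A)).toReal - G (Real.log (1 / t)) * t ^ ((N : ℝ) - D)|
        ≤ C * t ^ ((N : ℝ) - D + α)) :
    upperBoxDim N A = D ∧ lowerBoxDim N A = D ∧
      lowerMinkowskiContent N A D = ENNReal.ofReal (sInf (Set.range G)) ∧
      upperMinkowskiContent N A D = ENNReal.ofReal (sSup (Set.range G)) ∧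
      0 < lowerMinkowskiContent N A D ∧ upperMinkowskiContent N A D < ⊤ ∧
      lowerMinkowskiContent N A D ≠ upperMinkowskiContent N A D := by
  obtain ⟨C, ε, -, hε, hO⟩ := hO
  have hK : IsCompact (range G) := hGper.compact_of_continuous hT.ne' hGcont
  have herr := tendsto_div_rpow_sub_of_abs_sub_le hα hε hO
  have hupper : upperMinkowskiContent N A D = ENNReal.ofReal (⨆ x, G x) := by
    rw [upperMinkowskiContent_eq_iSup_of_tendsto hAb hGper hT herr,
      ENNReal.ofReal_mono.map_ciSup_of_continuousAt ENNReal.continuous_ofReal.continuousAt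
        hK.bddAbove]
  have hlower : lowerMinkowskiContent N A D = ENNReal.ofReal (⨅ x, G x) := by
    rw [lowerMinkowskiContent_eq_iInf_of_tendsto hAb hGper hT herr, ENNReal.ofReal_iInf]
  have hinf_pos : 0 < ⨅ x, G x := by
    obtain ⟨x, hx⟩ := hK.sInf_mem (range_nonempty G)
    exact (hGpos x).trans_eq hx
  have hinf_lt_sup : ⨅ x, G x < ⨆ x, G x :=
    let ⟨_, _, hxy⟩ := hGnonconst
    ciInf_lt_ciSup_of_ne hK.bddBelow hK.bddAbove hxy
  have hpos : 0 < lowerMinkowskiContent N A D := hlower ▸ ENNReal.ofReal_pos.2 hinf_pos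
  have hfin : upperMinkowskiContent N A D ≠ ⊤ := hupper ▸ ENNReal.ofReal_ne_top
  refine ⟨upperBoxDim_eq_of_pos_of_ne_top
    (hpos.trans_le (lowerMinkowskiContent_le_upperMinkowskiContent D)) hfin,
    lowerBoxDim_eq_of_pos_of_ne_top hpos hfin, hlower, hupper, hpos, hfin.lt_top, ?_⟩
  rw [hlower, hupper]
  exact ((ENNReal.ofReal_lt_ofReal_iff (hinf_pos.trans hinf_lt_sup)).2 hinf_lt_sup).ne

/-- Minkowski nonmeasurable case: if `|A_t| = t^{N-D}(G(log(1/t)) + O(t^α))` with `G`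
nonconstant, continuous, positive and `T`-periodic, then `dim_B A = D`,
`M_*^D(A) = min G`, `M^{*D}(A) = max G`; in particular `A` is Minkowski nondegenerate
and not Minkowski measurable. -/
theorem stmt_8 (N : ℕ) (A : Set (EuclideanSpace ℝ (Fin N))) (hA : A.Nonempty)
    (hAb : Bornology.IsBounded A) (G : ℝ → ℝ) (T : ℝ) (hT : 0 < T)
    (hGcont : Continuous G) (hGper : Function.Periodic G T)
    (hGpos : ∀ x, 0 < G x) (hGnonconst : ∃ x y, G x ≠ G y)
    (D α : ℝ) (hD : 0 ≤ D) (hα : 0 < α)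
    (hO : ∃ C ε : ℝ, 0 < C ∧ 0 < ε ∧ ∀ t : ℝ, 0 < t → t < ε →
      |(volume (Metric.thickening t A)).toReal - G (Real.log (1 / t)) * t ^ ((N : ℝ) - D)|
        ≤ C * t ^ ((N : ℝ) - D + α)) :
    upperBoxDim N A = D ∧ lowerBoxDim N A = D ∧
      lowerMinkowskiContent N A D = ENNReal.ofReal (sInf (Set.range G)) ∧
      upperMinkowskiContent N A D = ENNReal.ofReal (sSup (Set.range G)) ∧
      0 < lowerMinkowskiContent N A D ∧ upperMinkowskiContent N A D < ⊤ ∧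
      lowerMinkowskiContent N A D ≠ upperMinkowskiContent N A D :=
  stmt_8_general N A hAb G T hT hGcont hGper hGpos hGnonconst D α hα hO
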